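/- arXiv:2511.05562 — 5 statements merged into one kernel-verified Lean document; each statement's English description precedes it below -/
import Mathlib

section
/- Let T ≥ 1, let 𝒳_0, …, 𝒳_T be nonempty finite sets, for each t ∈ {1,…,T} let P_t : 𝒳_t × 𝒳_{t−1} → ℝ be a Markov kernel, let p_T be a probability distribution on 𝒳_T, and define p_{t−1}(y) = Σ_{x∈𝒳_t} p_t(x)·P_t(x,y) for t = T,…,1. Let α > 0 and r : 𝒳_0 → ℝ, and define value functions v_0(x) = exp(r(x)/α) and v_t(x) = Σ_{y∈𝒳_{t−1}} P_t(x,y)·v_{t−1}(y) for t = 1,…,T (so v_t(x) > 0 for all t, x). Define the optimal kernels P*_t(x,y) = P_t(x,y)·v_{t−1}(y)/v_t(x) and set Z_t = Σ_{x∈𝒳_t} p_t(x)·v_t(x). Then Z_t = Z_0 for all t ∈ {0,…,T}, and the time-0 marginal of the chain started from p*_T(x) = p_T(x)·v_T(x)/Z_T and evolved by P*_T, …, P*_1 — namely μ_0(x_0) = Σ_{x_T,…,x_1} p*_T(x_T)·∏_{t=1}^{T} P*_t(x_t, x_{t−1}) — equals p*_0(x_0) = p_0(x_0)·exp(r(x_0)/α)/Z_0.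 -/
/-!
The optimal kernels are the Doob `h`-transforms `P t x y * v t y / v (t + 1) x` of the `P t` by the
positive value functions. Since `v (t + 1) = P t v t` and `p t = p (t + 1) P t`, the sums
`Z t = ∑ p t * v t` do not depend on `t`, and the twisted marginals `p t * v t / Z` are pushed
backwards by the transformed kernels. For any backward chain, summing the path weights over all
paths through a given time-0 point gives the time-0 marginal, here `p 0 * v 0 / Z`.
-/

open Finset

section PathMass

variable {R : Type*} [CommSemiring R] {X : ℕ → Type*} [∀ t, Fintype (X t)]

def pathMass (Q : ∀ t, X (t + 1) → X t → R) (m : ∀ t, X t → R) (n : ℕ)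
    (g : (t : Fin (n + 1)) → X t) : R :=
  m n (g (Fin.last n)) * ∏ t : Fin n, Q t (g t.succ) (g t.castSucc)

variable (Q : ∀ t, X (t + 1) → X t → R) (m : ∀ t, X t → R)

omit [∀ t, Fintype (X t)] in
theorem pathMass_snoc (n : ℕ) (g : (t : Fin (n + 1)) → X t) (x : X (n + 1)) :
    pathMass Q m (n + 1) (Fin.snoc (α := fun t : Fin (n + 2) => X t) g x) =
      (∏ t : Fin n, Q t (g t.succ) (g t.castSucc)) * (m (n + 1) x * Q n x (g (Fin.last n))) := by
  simp only [pathMass, Fin.prod_univ_castSucc, Fin.snoc_last, Fin.succ_castSucc, Fin.snoc_castSucc,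
    Fin.succ_last, Fin.val_castSucc, Fin.val_last]
  ring

theorem sum_pathMass_snoc {n : ℕ} (hm : ∀ y, m n y = ∑ x, m (n + 1) x * Q n x y)
    (g : (t : Fin (n + 1)) → X t) :
    ∑ x : X (n + 1), pathMass Q m (n + 1) (Fin.snoc (α := fun t : Fin (n + 2) => X t) g x) =
      pathMass Q m n g := by
  simp only [pathMass_snoc]
  rw [← mul_sum, ← hm (g (Fin.last n)), pathMass, mul_comm]

theorem sum_mul_pathMass (n : ℕ) (hm : ∀ t < n, ∀ y, m t y = ∑ x, m (t + 1) x * Q t x y)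
    (w : X 0 → R) :
    ∑ g, w (g 0) * pathMass Q m n g = ∑ x, w x * m 0 x := by
  induction n with
  | zero =>
    rw [← (Equiv.piUnique (fun t : Fin 1 => X t)).symm.sum_comp]
    simp [pathMass, uniqueElim]
  | succ n ih =>
    rw [← (Fin.snocEquiv fun t : Fin (n + 2) => X t).sum_comp, Fintype.sum_prod_type_right,
      ← ih fun t ht => hm t (by omega)]
    refine sum_congr rfl fun g _ => ?_
    have snoc_zero : ∀ x, Fin.snoc (α := fun t : Fin (n + 2) => X t) g x 0 = g 0 :=
      fun x => Fin.snoc_castSucc (i := 0) ..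
    simp only [Fin.snocEquiv_apply, snoc_zero, ← mul_sum]
    exact congrArg _ (sum_pathMass_snoc Q m (hm n n.lt_succ_self) g)

theorem sum_filter_pathMass [DecidableEq (X 0)] (n : ℕ)
    (hm : ∀ t < n, ∀ y, m t y = ∑ x, m (t + 1) x * Q t x y) (x₀ : X 0) :
    ∑ g ∈ univ.filter (fun g : (t : Fin (n + 1)) → X t => g ⟨0, n.succ_pos⟩ = x₀),
      pathMass Q m n g = m 0 x₀ := by
  have h_indicator := sum_mul_pathMass Q m n hm (fun x => if x = x₀ then 1 else 0)
  simp only [ite_mul, one_mul, zero_mul, sum_ite_eq', mem_univ, if_true] at h_indicator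
  rw [sum_filter]
  exact h_indicator

end PathMass

section Kernel

variable {ι κ : Type*} [Fintype ι]

theorem sum_mul_pos_of_sum_eq_one {q f : ι → ℝ} (hq_nonneg : ∀ x, 0 ≤ q x)
    (hq_sum : ∑ x, q x = 1) (hf : ∀ x, 0 < f x) : 0 < ∑ x, q x * f x := by
  obtain ⟨x, -, hx⟩ : ∃ x ∈ univ, (0 : ι → ℝ) x < q x :=
    exists_lt_of_sum_lt (by simp [hq_sum])
  exact sum_pos' (fun x _ => mul_nonneg (hq_nonneg x) (hf x).le) ⟨x, mem_univ x, mul_pos hx (hf x)⟩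

theorem sum_mul_sum_mul_eq_sum_sum_mul {R : Type*} [NonUnitalSemiring R] [Fintype κ] (a : ι → R)
    (K : ι → κ → R) (b : κ → R) :
    ∑ x, a x * ∑ y, K x y * b y = ∑ y, (∑ x, a x * K x y) * b y :=
  Matrix.dotProduct_mulVec a K b

theorem sum_twisted_mul_hTransform_eq {K : Type*} [Field K] {P : ι → κ → K} {a : ι → K}
    {b : κ → K} {u : ι → K} {w : κ → K} (hu : ∀ x, u x ≠ 0) (Z : K) (y : κ)
    (hb : b y = ∑ x, a x * P x y) :
    ∑ x, a x * u x / Z * (P x y * w y / u x) = b y * w y / Z := by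
  have cancel : ∀ x, a x * u x / Z * (P x y * w y / u x) = a x * P x y * (w y / Z) := fun x => by
    field_simp [hu x]
  rw [sum_congr rfl fun x _ => cancel x, ← sum_mul, ← hb, mul_div_assoc]

end Kernel

section ValueFunction

variable {X : ℕ → Type*} [∀ t, Fintype (X t)] {T : ℕ}

theorem value_pos {P : ∀ t, X (t + 1) → X t → ℝ} (hP_nonneg : ∀ t < T, ∀ x y, 0 ≤ P t x y)
    (hP_sum : ∀ t < T, ∀ x, ∑ y, P t x y = 1) {v : ∀ t, X t → ℝ} (hv0 : ∀ x, 0 < v 0 x)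
    (hv_rec : ∀ t < T, ∀ x, v (t + 1) x = ∑ y, P t x y * v t y) :
    ∀ t ≤ T, ∀ x, 0 < v t x := by
  intro t
  induction t with
  | zero => exact fun _ => hv0
  | succ t ih =>
    intro ht x
    rw [hv_rec t ht]
    exact sum_mul_pos_of_sum_eq_one (hP_nonneg t ht x) (hP_sum t ht x) (ih (Nat.le_of_succ_le ht))

theorem sum_mul_value_eq {P : ∀ t, X (t + 1) → X t → ℝ} {p v : ∀ t, X t → ℝ}
    (hp_rec : ∀ t < T, ∀ y, p t y = ∑ x, p (t + 1) x * P t x y)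
    (hv_rec : ∀ t < T, ∀ x, v (t + 1) x = ∑ y, P t x y * v t y) :
    ∀ t ≤ T, ∑ x, p t x * v t x = ∑ x, p 0 x * v 0 x := by
  intro t
  induction t with
  | zero => exact fun _ => rfl
  | succ t ih =>
    intro ht
    rw [← ih (Nat.le_of_succ_le ht)]
    simp only [hv_rec t ht, hp_rec t ht, sum_mul_sum_mul_eq_sum_sum_mul]

end ValueFunction

theorem optimal_kernel_time_zero_marginal_general
    (T : ℕ) (X : ℕ → Type*) [∀ t, Fintype (X t)]
    [DecidableEq (X 0)]
    (P : ∀ t, X (t + 1) → X t → ℝ)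
    (hP_nonneg : ∀ t, t < T → ∀ x y, 0 ≤ P t x y)
    (hP_sum : ∀ t, t < T → ∀ x, ∑ y, P t x y = 1)
    (p : ∀ t, X t → ℝ)
    (hp_rec : ∀ t, t < T → ∀ y, p t y = ∑ x, p (t + 1) x * P t x y)
    (α : ℝ) (r : X 0 → ℝ)
    (v : ∀ t, X t → ℝ)
    (hv0 : ∀ x, v 0 x = Real.exp (r x / α))
    (hv_rec : ∀ t, t < T → ∀ x, v (t + 1) x = ∑ y, P t x y * v t y) :
    (∀ t ≤ T, ∑ x, p t x * v t x = ∑ x, p 0 x * v 0 x)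
    ∧ ∀ x0 : X 0,
        (∑ g ∈ Finset.univ.filter
            (fun g : (t : Fin (T + 1)) → X t => g ⟨0, Nat.succ_pos T⟩ = x0),
          p T (g (Fin.last T)) * v T (g (Fin.last T)) / (∑ x, p T x * v T x) *
            ∏ t : Fin T,
              P t (g t.succ) (g t.castSucc) * v t (g t.castSucc) / v (t + 1) (g t.succ))
        = p 0 x0 * Real.exp (r x0 / α) / (∑ x, p 0 x * v 0 x) := by
  have hv_pos := value_pos hP_nonneg hP_sum (fun x => hv0 x ▸ Real.exp_pos _) hv_rec
  have hZ := sum_mul_value_eq hp_rec hv_rec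
  refine ⟨hZ, fun x0 => ?_⟩
  rw [hZ T le_rfl, ← hv0 x0]
  exact sum_filter_pathMass (fun t x y => P t x y * v t y / v (t + 1) x)
    (fun t x => p t x * v t x / ∑ x, p 0 x * v 0 x) T
    (fun t ht y => (sum_twisted_mul_hTransform_eq (fun x => (hv_pos (t + 1) ht x).ne') _ y
      (hp_rec t ht y)).symm) x0

/-- For a backward chain of Markov kernels `P t : X (t+1) → X t → ℝ`
(`t = 0,…,T-1`, representing the kernels `P_{t+1}` of the paper), marginals `p t`
obtained from a distribution `p T` by pushing through the kernels, value functions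
`v 0 = exp(r/α)`, `v (t+1) x = Σ_y P t x y · v t y`, and the optimal kernels
`P*_t(x,y) = P t x y · v t y / v (t+1) x`:  the normalizing constants
`Z t = Σ_x p t x · v t x` agree for all `t ≤ T`, and the time-0 marginal of the chain
started from `p*_T(x) = p T x · v T x / Z T` and evolved by the optimal kernels equals
`p*_0(x₀) = p 0 x₀ · exp(r x₀ / α) / Z 0`. -/
theorem optimal_kernel_time_zero_marginal
    (T : ℕ) (hT : 1 ≤ T) (X : ℕ → Type*) [∀ t, Fintype (X t)] [∀ t, Nonempty (X t)]
    [DecidableEq (X 0)]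
    (P : ∀ t, X (t + 1) → X t → ℝ)
    (hP_nonneg : ∀ t, t < T → ∀ x y, 0 ≤ P t x y)
    (hP_sum : ∀ t, t < T → ∀ x, ∑ y, P t x y = 1)
    (p : ∀ t, X t → ℝ)
    (hpT_nonneg : ∀ x, 0 ≤ p T x) (hpT_sum : ∑ x, p T x = 1)
    (hp_rec : ∀ t, t < T → ∀ y, p t y = ∑ x, p (t + 1) x * P t x y)
    (α : ℝ) (hα : 0 < α) (r : X 0 → ℝ)
    (v : ∀ t, X t → ℝ)
    (hv0 : ∀ x, v 0 x = Real.exp (r x / α))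
    (hv_rec : ∀ t, t < T → ∀ x, v (t + 1) x = ∑ y, P t x y * v t y) :
    (∀ t ≤ T, ∑ x, p t x * v t x = ∑ x, p 0 x * v 0 x)
    ∧ ∀ x0 : X 0,
        (∑ g ∈ Finset.univ.filter
            (fun g : (t : Fin (T + 1)) → X t => g ⟨0, Nat.succ_pos T⟩ = x0),
          p T (g (Fin.last T)) * v T (g (Fin.last T)) / (∑ x, p T x * v T x) *
            ∏ t : Fin T,
              P t (g t.succ) (g t.castSucc) * v t (g t.castSucc) / v (t + 1) (g t.succ))
        = p 0 x0 * Real.exp (r x0 / α) / (∑ x, p 0 x * v 0 x) :=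
  optimal_kernel_time_zero_marginal_general T X P hP_nonneg hP_sum p hp_rec α r v hv0 hv_rec
end

section
/- Let 𝒳 be a nonempty finite set, p a probability distribution on 𝒳 with p(x) > 0 for all x, K a Markov kernel on 𝒳 with K(x,y) > 0 for all x, y that is reversible with respect to p, α > 0, and r : 𝒳 → ℝ. Let p*(x) = p(x)·exp(r(x)/α)/Z with Z = Σ_{x'} p(x')·exp(r(x')/α), let λ(x,y) = 1/(p(x)·K(x,y)·exp((r(x)+r(y))/α)), and define the Multiple-Try Metropolis weight w(x,y) = p*(y)·K(y,x)·λ(y,x). Then w(x,y) = exp(−r(x)/α)/Z for all y; in particular w(x,·) does not depend on y, and for any N ≥ 1 and any candidates y_1, …, y_N ∈ 𝒳, the normalized selection weight satisfies w(x, y_n) / Σ_{j=1}^{N} w(x, y_j) = 1/N for every n. -/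
/-! The balancing function `λ(y, x)` cancels exactly the factors `p y`, `K y x` and `exp (r y / α)`
of `p*(y) K(y, x)`, so the weight `w(x, y)` does not depend on the candidate `y`. -/

open Real Finset

lemma tilted_mul_mul_balancing_eq {p k r r' α Z : ℝ} (hp : p ≠ 0) (hk : k ≠ 0) :
    p * exp (r / α) / Z * k * (1 / (p * k * exp ((r + r') / α))) = exp (-r' / α) / Z := by
  rw [add_div, exp_add, neg_div, exp_neg]
  field_simp

lemma div_sum_eq_one_div_card_of_forall_eq {ι 𝕜 : Type*} [Fintype ι] [Field 𝕜] [CharZero 𝕜]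
    {f : ι → 𝕜} {c : 𝕜} (hc : c ≠ 0) (hf : ∀ i, f i = c) (i : ι) :
    f i / ∑ j, f j = 1 / Fintype.card ι := by
  have : Nonempty ι := ⟨i⟩
  have hcard : (Fintype.card ι : 𝕜) ≠ 0 := Nat.cast_ne_zero.mpr Fintype.card_ne_zero
  simp only [hf, sum_const, card_univ, nsmul_eq_mul]
  field_simp

theorem mtm_weight_uniform_general
    {X : Type*} [Fintype X]
    (p : X → ℝ) (hp_pos : ∀ x, 0 < p x)
    (K : X → X → ℝ) (hK_pos : ∀ x y, 0 < K x y)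
    (α : ℝ) (r : X → ℝ)
    (pstar : X → ℝ)
    (hpstar : ∀ x, pstar x =
      p x * Real.exp (r x / α) / ∑ x', p x' * Real.exp (r x' / α))
    (lam : X → X → ℝ)
    (hlam : ∀ x y, lam x y = 1 / (p x * K x y * Real.exp ((r x + r y) / α)))
    (w : X → X → ℝ) (hw : ∀ x y, w x y = pstar y * K y x * lam y x) :
    (∀ x y, w x y =
      Real.exp (-(r x) / α) / ∑ x', p x' * Real.exp (r x' / α))
    ∧ ∀ N : ℕ, 1 ≤ N → ∀ x : X, ∀ ys : Fin N → X, ∀ n : Fin N,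
        w x (ys n) / (∑ j, w x (ys j)) = 1 / (N : ℝ) := by
  have hw_eq : ∀ x y, w x y = exp (-(r x) / α) / ∑ x', p x' * exp (r x' / α) := fun x y => by
    rw [hw, hpstar, hlam]
    exact tilted_mul_mul_balancing_eq (hp_pos y).ne' (hK_pos y x).ne'
  refine ⟨hw_eq, fun N _ x ys n => ?_⟩
  have hZ : 0 < ∑ x', p x' * exp (r x' / α) :=
    sum_pos (fun x' _ => mul_pos (hp_pos x') (exp_pos _)) ⟨x, mem_univ x⟩
  simpa only [Fintype.card_fin] using div_sum_eq_one_div_card_of_forall_eq (f := fun j => w x (ys j))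
    (div_ne_zero (exp_ne_zero _) hZ.ne') (fun j => hw_eq x (ys j)) n

/-- With target `p*(x) = p x · exp(r x / α) / Z`,
`Z = Σ_{x'} p x' · exp(r x' / α)`, balancing function
`λ(x,y) = 1/(p x · K x y · exp((r x + r y)/α))`, and Multiple-Try Metropolis weight
`w(x,y) = p*(y) · K(y,x) · λ(y,x)`, one has `w(x,y) = exp(−r x / α)/Z` for every `y`;
in particular `w(x,·)` does not depend on `y`, and for any `N ≥ 1` candidates
`y₁,…,y_N` the normalized selection weight is uniform: `w(x,yₙ)/Σⱼ w(x,yⱼ) = 1/N`. -/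
theorem mtm_weight_uniform
    {X : Type*} [Fintype X] [Nonempty X]
    (p : X → ℝ) (hp_pos : ∀ x, 0 < p x) (hp_sum : ∑ x, p x = 1)
    (K : X → X → ℝ) (hK_pos : ∀ x y, 0 < K x y) (hK_sum : ∀ x, ∑ y, K x y = 1)
    (hrev : ∀ x y, p x * K x y = p y * K y x)
    (α : ℝ) (hα : 0 < α) (r : X → ℝ)
    (pstar : X → ℝ)
    (hpstar : ∀ x, pstar x =
      p x * Real.exp (r x / α) / ∑ x', p x' * Real.exp (r x' / α))
    (lam : X → X → ℝ)
    (hlam : ∀ x y, lam x y = 1 / (p x * K x y * Real.exp ((r x + r y) / α)))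
    (w : X → X → ℝ) (hw : ∀ x y, w x y = pstar y * K y x * lam y x) :
    (∀ x y, w x y =
      Real.exp (-(r x) / α) / ∑ x', p x' * Real.exp (r x' / α))
    ∧ ∀ N : ℕ, 1 ≤ N → ∀ x : X, ∀ ys : Fin N → X, ∀ n : Fin N,
        w x (ys n) / (∑ j, w x (ys j)) = 1 / (N : ℝ) :=
  mtm_weight_uniform_general p hp_pos K hK_pos α r pstar hpstar lam hlam w hw
end

section
/- Let 𝒳 be a nonempty finite set, p a probability distribution on 𝒳 with p(x) > 0 for all x, K a Markov kernel on 𝒳 with K(x,y) > 0 for all x, y that is reversible with respect to p, α > 0, and r : 𝒳 → ℝ. Let p*(x) = p(x)·exp(r(x)/α)/Z with Z = Σ_{x'} p(x')·exp(r(x')/α), let λ(x,y) = 1/(p(x)·K(x,y)·exp((r(x)+r(y))/α)), and w(x,y) = p*(y)·K(y,x)·λ(y,x). Then for every N ≥ 1, every pair of states x, y ∈ 𝒳, and arbitrary candidate families y_1,…,y_N ∈ 𝒳 and reference families x_1,…,x_N ∈ 𝒳, the Multiple-Try Metropolis acceptance ratio satisfies (Σ_{j=1}^{N} w(x, y_j))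 / (Σ_{j=1}^{N} w(y, x_j)) = exp((r(y) − r(x))/α); hence the acceptance probability min{1, Σ_j w(x,y_j)/Σ_j w(y,x_j)} equals min{1, exp((r(y) − r(x))/α)} and is independent of the candidate and reference samples. -/
/-!
The balancing function `λ` cancels everything in `w(x, y) = p*(y) K(y, x) λ(y, x)` except
`exp (-r(x)/α) / Z`, so the weight does not depend on the candidate `y`. Both sums in the
acceptance ratio are therefore `N` times a constant, and the ratio of the constants is
`exp ((r(y) - r(x))/α)`.
-/

open Real Finset

theorem mul_exp_div_mul_one_div_mul_exp_add {a k Z s t : ℝ} (ha : a ≠ 0) (hk : k ≠ 0) :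
    a * exp s / Z * k * (1 / (a * k * exp (s + t))) = exp (-t) / Z := by
  rw [exp_add, exp_neg]
  field_simp

theorem sum_const_div_sum_const {K : Type*} [Field K] [CharZero K] {N : ℕ} (hN : N ≠ 0)
    (c d : K) : (∑ _j : Fin N, c) / (∑ _j : Fin N, d) = c / d := by
  simp only [sum_const, card_univ, Fintype.card_fin, nsmul_eq_mul]
  exact mul_div_mul_left c d (Nat.cast_ne_zero.mpr hN)

theorem mtm_acceptance_ratio_general
    {X : Type*} [Fintype X]
    (p : X → ℝ) (hp_pos : ∀ x, 0 < p x)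
    (K : X → X → ℝ) (hK_pos : ∀ x y, 0 < K x y)
    (α : ℝ) (r : X → ℝ)
    (pstar : X → ℝ)
    (hpstar : ∀ x, pstar x =
      p x * Real.exp (r x / α) / ∑ x', p x' * Real.exp (r x' / α))
    (lam : X → X → ℝ)
    (hlam : ∀ x y, lam x y = 1 / (p x * K x y * Real.exp ((r x + r y) / α)))
    (w : X → X → ℝ) (hw : ∀ x y, w x y = pstar y * K y x * lam y x) :
    ∀ N : ℕ, 1 ≤ N → ∀ x y : X, ∀ ys xs : Fin N → X,
      (∑ j, w x (ys j)) / (∑ j, w y (xs j)) = Real.exp ((r y - r x) / α)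
      ∧ min 1 ((∑ j, w x (ys j)) / (∑ j, w y (xs j)))
          = min 1 (Real.exp ((r y - r x) / α)) := by
  intro N hN x y ys xs
  set Z := ∑ x', p x' * exp (r x' / α)
  have hZ : Z ≠ 0 :=
    (sum_pos (fun x' _ => mul_pos (hp_pos x') (exp_pos _)) ⟨x, mem_univ x⟩).ne'
  have hw_const : ∀ u v, w u v = exp (-(r u / α)) / Z := fun u v => by
    rw [hw, hpstar, hlam, add_div]
    exact mul_exp_div_mul_one_div_mul_exp_add (hp_pos v).ne' (hK_pos v u).ne'
  have hratio : (∑ j, w x (ys j)) / (∑ j, w y (xs j)) = exp ((r y - r x) / α) := by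
    simp only [hw_const]
    rw [sum_const_div_sum_const (by omega), div_div_div_cancel_right₀ hZ, ← exp_sub]
    ring_nf
  exact ⟨hratio, by rw [hratio]⟩

/-- With target `p*(x) = p x · exp(r x / α) / Z`, balancing function
`λ(x,y) = 1/(p x · K x y · exp((r x + r y)/α))`, and MTM weight
`w(x,y) = p*(y)·K(y,x)·λ(y,x)`, for every `N ≥ 1`, states `x, y` and arbitrary
candidate family `y₁,…,y_N` and reference family `x₁,…,x_N`, the MTM acceptance ratio
satisfies `(Σⱼ w(x,yⱼ))/(Σⱼ w(y,xⱼ)) = exp((r y − r x)/α)`; hence the acceptance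
probability `min{1, ·}` equals `min{1, exp((r y − r x)/α)}`, independently of the
candidate and reference samples. -/
theorem mtm_acceptance_ratio
    {X : Type*} [Fintype X] [Nonempty X]
    (p : X → ℝ) (hp_pos : ∀ x, 0 < p x) (hp_sum : ∑ x, p x = 1)
    (K : X → X → ℝ) (hK_pos : ∀ x y, 0 < K x y) (hK_sum : ∀ x, ∑ y, K x y = 1)
    (hrev : ∀ x y, p x * K x y = p y * K y x)
    (α : ℝ) (hα : 0 < α) (r : X → ℝ)
    (pstar : X → ℝ)
    (hpstar : ∀ x, pstar x =
      p x * Real.exp (r x / α) / ∑ x', p x' * Real.exp (r x' / α))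
    (lam : X → X → ℝ)
    (hlam : ∀ x y, lam x y = 1 / (p x * K x y * Real.exp ((r x + r y) / α)))
    (w : X → X → ℝ) (hw : ∀ x y, w x y = pstar y * K y x * lam y x) :
    ∀ N : ℕ, 1 ≤ N → ∀ x y : X, ∀ ys xs : Fin N → X,
      (∑ j, w x (ys j)) / (∑ j, w y (xs j)) = Real.exp ((r y - r x) / α)
      ∧ min 1 ((∑ j, w x (ys j)) / (∑ j, w y (xs j)))
          = min 1 (Real.exp ((r y - r x) / α)) :=
  mtm_acceptance_ratio_general p hp_pos K hK_pos α r pstar hpstar lam hlam w hw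
end

section
/- Let 𝒳 be a nonempty finite set, π a probability distribution on 𝒳 with π(x) > 0 for all x, K a Markov kernel on 𝒳 with K(x,y) > 0 for all x, y, λ : 𝒳 × 𝒳 → ℝ symmetric with λ(x,y) = λ(y,x) > 0 for all x, y, and N ≥ 1 an integer. Define w(a,b) = π(b)·K(b,a)·λ(b,a), and for x ≠ y define the Multiple-Try Metropolis transition probability A(x,y) = N · Σ_{(y_2,…,y_N) ∈ 𝒳^{N−1}} Σ_{(x_1,…,x_{N−1}) ∈ 𝒳^{N−1}} [ K(x,y)·∏_{j=2}^{N} K(x,y_j) · ( w(x,y) / (w(x,y) + Σ_{j=2}^{N} w(x,y_j)) ) · ( ∏_{j=1}^{N−1} K(y,x_j) ) · min{ 1, (w(x,y) + Σ_{j=2}^{N} w(x,y_j)) / (w(y,x) + Σ_{j=1}^{N−1} w(y,x_j)) } ]. Then the detailed balance condition π(x)·A(x,y) = π(y)·A(y,x) holds for all x ≠ y. -/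
/-- Detailed balance of the Multiple-Try Metropolis chain.  With positive
target `π`, positive proposal kernel `K`, positive symmetric balancing function `λ`,
weights `w(a,b) = π(b)·K(b,a)·λ(b,a)`, and `N ≥ 1` trials, the off-diagonal MTM
transition probability
`A(x,y) = N·Σ_{y₂,…,y_N} Σ_{x₁,…,x_{N−1}} K(x,y)·∏ⱼK(x,yⱼ)·(w(x,y)/(w(x,y)+Σⱼw(x,yⱼ)))·
  (∏ⱼK(y,xⱼ))·min{1, (w(x,y)+Σⱼw(x,yⱼ))/(w(y,x)+Σⱼw(y,xⱼ))}`
satisfies detailed balance `π(x)·A(x,y) = π(y)·A(y,x)` for all `x ≠ y`. -/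
theorem mtm_detailed_balance
    {X : Type*} [Fintype X] [Nonempty X]
    (π : X → ℝ) (hπ_pos : ∀ x, 0 < π x) (hπ_sum : ∑ x, π x = 1)
    (K : X → X → ℝ) (hK_pos : ∀ x y, 0 < K x y) (hK_sum : ∀ x, ∑ y, K x y = 1)
    (lam : X → X → ℝ) (hlam_symm : ∀ x y, lam x y = lam y x)
    (hlam_pos : ∀ x y, 0 < lam x y)
    (N : ℕ) (hN : 1 ≤ N)
    (w : X → X → ℝ) (hw : ∀ a b, w a b = π b * K b a * lam b a)
    (A : X → X → ℝ)
    (hA : ∀ x y, x ≠ y →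
      A x y = (N : ℝ) *
        ∑ ys : Fin (N - 1) → X, ∑ xs : Fin (N - 1) → X,
          K x y * (∏ j, K x (ys j)) *
            (w x y / (w x y + ∑ j, w x (ys j))) *
            (∏ j, K y (xs j)) *
            min 1 ((w x y + ∑ j, w x (ys j)) / (w y x + ∑ j, w y (xs j)))) :
    ∀ x y, x ≠ y → π x * A x y = π y * A y x := by
  have hw_pos : ∀ a b, 0 < w a b := fun a b => by
    rw [hw]
    exact mul_pos (mul_pos (hπ_pos b) (hK_pos b a)) (hlam_pos b a)
  have hS_pos : ∀ (a b : X) (zs : Fin (N - 1) → X),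
      0 < w a b + ∑ j, w a (zs j) := by
    intro a b zs
    have h0 : 0 ≤ ∑ j, w a (zs j) :=
      Finset.sum_nonneg fun j _ => (hw_pos a (zs j)).le
    linarith [hw_pos a b]
  have hmin : ∀ a b : ℝ, 0 < a → 0 < b →
      (1 / a) * min 1 (a / b) = min (1 / a) (1 / b) := by
    intro a b ha hb
    rcases le_total a b with h | h
    · rw [min_eq_right (by rw [div_le_one hb]; exact h),
        min_eq_right (by gcongr)]
      field_simp
    · rw [min_eq_left (by rw [le_div_iff₀ hb]; linarith),
        min_eq_left (by gcongr)]
      ring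
  intro x y hxy
  have hcore : π x * K x y * w x y = π y * K y x * w y x := by
    rw [hw, hw, hlam_symm x y]; ring
  have key : ∀ ys xs : Fin (N - 1) → X,
      π x * (K x y * (∏ j, K x (ys j)) * (w x y / (w x y + ∑ j, w x (ys j))) *
        (∏ j, K y (xs j)) *
        min 1 ((w x y + ∑ j, w x (ys j)) / (w y x + ∑ j, w y (xs j))))
      = π y * (K y x * (∏ j, K y (xs j)) * (w y x / (w y x + ∑ j, w y (xs j))) *
        (∏ j, K x (ys j)) *
        min 1 ((w y x + ∑ j, w y (xs j)) / (w x y + ∑ j, w x (ys j)))) := by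
    intro ys xs
    have hSxp := hS_pos x y ys
    have hSyp := hS_pos y x xs
    set Sx := w x y + ∑ j, w x (ys j) with hSx
    set Sy := w y x + ∑ j, w y (xs j) with hSy
    calc π x * (K x y * (∏ j, K x (ys j)) * (w x y / Sx) * (∏ j, K y (xs j)) *
            min 1 (Sx / Sy))
        = (π x * K x y * w x y) * ((∏ j, K x (ys j)) * (∏ j, K y (xs j))) *
            ((1 / Sx) * min 1 (Sx / Sy)) := by ring
      _ = (π y * K y x * w y x) * ((∏ j, K x (ys j)) * (∏ j, K y (xs j))) *
            min (1 / Sx) (1 / Sy) := by rw [hcore, hmin _ _ hSxp hSyp]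
      _ = (π y * K y x * w y x) * ((∏ j, K x (ys j)) * (∏ j, K y (xs j))) *
            ((1 / Sy) * min 1 (Sy / Sx)) := by rw [hmin _ _ hSyp hSxp, min_comm]
      _ = π y * (K y x * (∏ j, K y (xs j)) * (w y x / Sy) * (∏ j, K x (ys j)) *
            min 1 (Sy / Sx)) := by ring
  rw [hA x y hxy, hA y x hxy.symm, mul_left_comm, mul_left_comm (π y)]
  congr 1
  simp only [Finset.mul_sum]
  rw [Finset.sum_comm (γ := Fin (N - 1) → X)]
  exact Finset.sum_congr rfl fun ys _ => Finset.sum_congr rfl fun xs _ => key xs ys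
end

section
/- Let 𝒳 be a nonempty finite set, let A be a Markov kernel on 𝒳 with A(x,y) > 0 for all x, y ∈ 𝒳, and let π be a probability distribution on 𝒳 with π(x) > 0 for all x that satisfies detailed balance with respect to A, i.e., π(x)·A(x,y) = π(y)·A(y,x) for all x, y. Then for every probability distribution μ on 𝒳 and every y ∈ 𝒳, the n-step distribution (μA^n)(y) = Σ_{x∈𝒳} μ(x)·A^n(x,y) converges to π(y) as n → ∞, where A^n denotes the n-fold composition of the kernel A (A^1 = A and A^{n+1}(x,y) = Σ_{z∈𝒳} A^n(x,z)·A(z,y)). -/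
/-- `kerPow A n` is the `(n+1)`-fold composition `A^{n+1}` of the kernel `A`:
`kerPow A 0 = A^1 = A` and `kerPow A (n+1) (x,y) = Σ_z kerPow A n (x,z) · A (z,y)`,
i.e. `A^{n+2} = A^{n+1} ∘ A`. -/
def kerPow {X : Type*} [Fintype X] (A : X → X → ℝ) : ℕ → X → X → ℝ
  | 0 => A
  | n + 1 => fun x y => ∑ z, kerPow A n x z * A z y

section aux

variable {X : Type*} [Fintype X] [Nonempty X]

lemma kerPow_succ_left (A : X → X → ℝ) : ∀ (n : ℕ) (x y : X),
    kerPow A (n+1) x y = ∑ z, A x z * kerPow A n z y := by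
  intro n
  induction n with
  | zero => intro x y; simp only [kerPow]
  | succ n ih =>
    intro x y
    calc kerPow A (n+2) x y = ∑ z, kerPow A (n+1) x z * A z y := rfl
    _ = ∑ z, (∑ w, A x w * kerPow A n w z) * A z y := by simp_rw [ih]
    _ = ∑ w, A x w * ∑ z, kerPow A n w z * A z y := by
        simp_rw [Finset.sum_mul, Finset.mul_sum]
        rw [Finset.sum_comm]
        simp_rw [mul_assoc]
    _ = ∑ w, A x w * kerPow A (n+1) w y := rfl

lemma kerPow_stationary (A : X → X → ℝ) (π : X → ℝ)
    (hstat : ∀ y, ∑ x, π x * A x y = π y) :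
    ∀ (n : ℕ) (y : X), ∑ x, π x * kerPow A n x y = π y := by
  intro n
  induction n with
  | zero => intro y; exact hstat y
  | succ n ih =>
    intro y
    calc ∑ x, π x * kerPow A (n+1) x y
        = ∑ x, π x * ∑ z, kerPow A n x z * A z y := rfl
    _ = ∑ z, (∑ x, π x * kerPow A n x z) * A z y := by
        simp_rw [Finset.mul_sum]
        rw [Finset.sum_comm]
        simp_rw [Finset.sum_mul, mul_assoc]
    _ = ∑ z, π z * A z y := by simp_rw [ih]
    _ = π y := hstat y

end aux

/-- If `A` is a strictly positive Markov kernel on a nonempty finite set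
and `π` is a strictly positive probability distribution satisfying detailed balance
`π(x)·A(x,y) = π(y)·A(y,x)`, then for every probability distribution `μ` and every
`y`, the `n`-step distribution `(μ Aⁿ)(y) = Σ_x μ(x)·Aⁿ(x,y)` converges to `π(y)` as
`n → ∞` (here `kerPow A n = A^{n+1}`, running over all `n ≥ 1`). -/
theorem positive_reversible_kernel_converges
    {X : Type*} [Fintype X] [Nonempty X]
    (A : X → X → ℝ) (hA_pos : ∀ x y, 0 < A x y) (hA_sum : ∀ x, ∑ y, A x y = 1)
    (π : X → ℝ) (hπ_pos : ∀ x, 0 < π x) (hπ_sum : ∑ x, π x = 1)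
    (hdb : ∀ x y, π x * A x y = π y * A y x) :
    ∀ μ : X → ℝ, (∀ x, 0 ≤ μ x) → (∑ x, μ x = 1) →
      ∀ y : X,
        Filter.Tendsto (fun n : ℕ => ∑ x, μ x * kerPow A n x y)
          Filter.atTop (nhds (π y)) := by
  intro μ hμ_nonneg hμ_sum y
  have hne : (Finset.univ : Finset X).Nonempty := Finset.univ_nonempty
  -- stationarity of π
  have hstat : ∀ y, ∑ x, π x * A x y = π y := by
    intro y
    calc ∑ x, π x * A x y = ∑ x, π y * A y x := by simp_rw [hdb]
    _ = π y * ∑ x, A y x := by rw [Finset.mul_sum]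
    _ = π y := by rw [hA_sum, mul_one]
  -- Doeblin coefficient
  set c : ℝ := ∑ z, Finset.univ.inf' hne (fun x => A x z) with hc
  have hc_pos : 0 < c := by
    apply Finset.sum_pos
    · intro z _
      rw [Finset.lt_inf'_iff]
      intro x _
      exact hA_pos x z
    · exact hne
  obtain ⟨x0⟩ := ‹Nonempty X›
  have hc_le : c ≤ 1 := by
    calc c ≤ ∑ z, A x0 z := by
          apply Finset.sum_le_sum
          intro z _
          exact Finset.inf'_le _ (Finset.mem_univ x0)
    _ = 1 := hA_sum x0
  -- M n, m n
  set M : ℕ → ℝ := fun n => Finset.univ.sup' hne (fun x => kerPow A n x y) with hM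
  set m : ℕ → ℝ := fun n => Finset.univ.inf' hne (fun x => kerPow A n x y) with hm
  have hmM : ∀ n, m n ≤ M n := by
    intro n
    exact le_trans (Finset.inf'_le (fun x => kerPow A n x y) (Finset.mem_univ x0))
      (Finset.le_sup' (fun x => kerPow A n x y) (Finset.mem_univ x0))
  -- bounds for kerPow entries
  have hk_nonneg : ∀ n x z, 0 ≤ kerPow A n x z := by
    intro n
    induction n with
    | zero => intro x z; exact (hA_pos x z).le
    | succ n ih =>
      intro x z
      exact Finset.sum_nonneg fun w _ => mul_nonneg (ih x w) (hA_pos w z).le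
  have hk_rowsum : ∀ n x, ∑ z, kerPow A n x z = 1 := by
    intro n
    induction n with
    | zero => exact hA_sum
    | succ n ih =>
      intro x
      calc ∑ z, kerPow A (n+1) x z = ∑ z, ∑ w, kerPow A n x w * A w z := rfl
      _ = ∑ w, kerPow A n x w * ∑ z, A w z := by
          rw [Finset.sum_comm]; simp_rw [Finset.mul_sum]
      _ = 1 := by simp_rw [hA_sum, mul_one]; exact ih x
  -- contraction step
  have hcontr : ∀ n, M (n+1) - m (n+1) ≤ (1 - c) * (M n - m n) := by
    intro n
    obtain ⟨xM, _, hxM⟩ := Finset.exists_mem_eq_sup' hne (fun x => kerPow A (n+1) x y)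
    obtain ⟨xm, _, hxm⟩ := Finset.exists_mem_eq_inf' hne (fun x => kerPow A (n+1) x y)
    have key : kerPow A (n+1) xM y - kerPow A (n+1) xm y ≤ (1 - c) * (M n - m n) := by
      rw [kerPow_succ_left, kerPow_succ_left]
      set g : X → ℝ := fun z => min (A xM z) (A xm z) with hg
      have hsg_ge : c ≤ ∑ z, g z := by
        apply Finset.sum_le_sum
        intro z _
        exact le_min (Finset.inf'_le _ (Finset.mem_univ xM))
          (Finset.inf'_le _ (Finset.mem_univ xm))
      have e1 : ∑ z, A xM z * kerPow A n z y - ∑ z, A xm z * kerPow A n z y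
          = ∑ z, (A xM z - g z) * kerPow A n z y
            - ∑ z, (A xm z - g z) * kerPow A n z y := by
        rw [← Finset.sum_sub_distrib, ← Finset.sum_sub_distrib]
        congr 1
        funext z
        ring
      rw [e1]
      have h1 : ∑ z, (A xM z - g z) * kerPow A n z y ≤ ∑ z, (A xM z - g z) * M n := by
        apply Finset.sum_le_sum
        intro z _
        apply mul_le_mul_of_nonneg_left (Finset.le_sup' _ (Finset.mem_univ z))
        simp [hg]
      have h2 : ∑ z, (A xm z - g z) * m n ≤ ∑ z, (A xm z - g z) * kerPow A n z y := by
        apply Finset.sum_le_sum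
        intro z _
        apply mul_le_mul_of_nonneg_left (Finset.inf'_le _ (Finset.mem_univ z))
        simp [hg]
      have e2 : ∑ z, (A xM z - g z) * M n = (1 - ∑ z, g z) * M n := by
        rw [← Finset.sum_mul, Finset.sum_sub_distrib, hA_sum]
      have e3 : ∑ z, (A xm z - g z) * m n = (1 - ∑ z, g z) * m n := by
        rw [← Finset.sum_mul, Finset.sum_sub_distrib, hA_sum]
      calc ∑ z, (A xM z - g z) * kerPow A n z y - ∑ z, (A xm z - g z) * kerPow A n z y
          ≤ (1 - ∑ z, g z) * M n - (1 - ∑ z, g z) * m n := by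
            rw [← e2, ← e3]; exact sub_le_sub h1 h2
      _ = (1 - ∑ z, g z) * (M n - m n) := by ring
      _ ≤ (1 - c) * (M n - m n) := by
            apply mul_le_mul_of_nonneg_right _ (sub_nonneg.mpr (hmM n))
            linarith
    have eM : M (n+1) = kerPow A (n+1) xM y := hxM
    have em : m (n+1) = kerPow A (n+1) xm y := hxm
    rw [eM, em]
    exact key
  -- geometric bound
  have hbound : ∀ n, M n - m n ≤ (1 - c) ^ n := by
    intro n
    induction n with
    | zero =>
      simp only [pow_zero]
      have hM0 : M 0 ≤ 1 := by
        apply Finset.sup'_le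
        intro x _
        have : A x y ≤ ∑ z, A x z :=
          Finset.single_le_sum (fun z _ => (hA_pos x z).le) (Finset.mem_univ y)
        simpa [kerPow, hA_sum x] using this
      have hm0 : 0 ≤ m 0 := by
        apply Finset.le_inf'
        intro x _
        exact (hA_pos x y).le
      linarith
    | succ n ih =>
      calc M (n+1) - m (n+1) ≤ (1 - c) * (M n - m n) := hcontr n
      _ ≤ (1 - c) * (1 - c) ^ n := by
          apply mul_le_mul_of_nonneg_left ih
          linarith
      _ = (1 - c) ^ (n+1) := by ring
  -- both sequences lie in [m n, M n]
  have hsandwich : ∀ (ν : X → ℝ), (∀ x, 0 ≤ ν x) → (∑ x, ν x = 1) →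
      ∀ n, m n ≤ ∑ x, ν x * kerPow A n x y ∧ ∑ x, ν x * kerPow A n x y ≤ M n := by
    intro ν hν hνs n
    have e1 : ∑ x, ν x * m n = m n := by rw [← Finset.sum_mul, hνs, one_mul]
    have e2 : ∑ x, ν x * M n = M n := by rw [← Finset.sum_mul, hνs, one_mul]
    constructor
    · rw [← e1]
      apply Finset.sum_le_sum
      intro x _
      exact mul_le_mul_of_nonneg_left
        (Finset.inf'_le (fun x => kerPow A n x y) (Finset.mem_univ x)) (hν x)
    · rw [← e2]
      apply Finset.sum_le_sum
      intro x _
      exact mul_le_mul_of_nonneg_left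
        (Finset.le_sup' (fun x => kerPow A n x y) (Finset.mem_univ x)) (hν x)
  have hπy : ∀ n, ∑ x, π x * kerPow A n x y = π y := fun n =>
    kerPow_stationary A π hstat n y
  have hdiff : ∀ n, |∑ x, μ x * kerPow A n x y - π y| ≤ (1 - c) ^ n := by
    intro n
    obtain ⟨h1, h2⟩ := hsandwich μ hμ_nonneg hμ_sum n
    obtain ⟨h3, h4⟩ := hsandwich π (fun x => (hπ_pos x).le) hπ_sum n
    rw [hπy n] at h3 h4
    rw [abs_le]
    constructor
    · have := hbound n; linarith
    · have := hbound n; linarith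
  have hgeo : Filter.Tendsto (fun n : ℕ => (1 - c) ^ n) Filter.atTop (nhds 0) := by
    apply tendsto_pow_atTop_nhds_zero_of_lt_one <;> linarith
  have h0 : Filter.Tendsto (fun n : ℕ => ∑ x, μ x * kerPow A n x y - π y)
      Filter.atTop (nhds 0) := by
    apply squeeze_zero_norm _ hgeo
    intro n
    simpa [Real.norm_eq_abs] using hdiff n
  have := h0.add_const (π y)
  simpa using this
end
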